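/- arXiv:1008.3934 — 4 statements merged into one kernel-verified Lean document; each statement's English description precedes it below -/
import Mathlib

section
/- (Lee–Yang circle theorem.) Let n ≥ 1 and let x : Fin n → Fin n → ℝ be symmetric (x_{αβ} = x_{βα}) with |x_{αβ}| ≤ 1 for all α ≠ β. For 0 ≤ γ ≤ n define Q_γ = Σ_{a ⊆ {1,…,n}, |a| = γ} Π_{α ∈ a} Π_{β ∉ a} x_{αβ}, and let Q(z) = Σ_{γ=0}^{n} Q_γ z^γ, a polynomial with real coefficients (note Q_0 = Q_n = 1). Then every complex root z of Q satisfies |z| = 1. -/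
/-!
Put `z_α = w` for all `α` in the multiaffine polynomial `Σ_a (Π_{α ∈ a, β ∉ a} x_αβ) z^a`. Its
coefficient of `z^a` is a product over the pairs `α < β` of `x_αβ` or `1`, according as `a`
separates `α` from `β` or not. Multiplying the coefficients by one such edge factor preserves
non-vanishing on the open unit polydisc: it is the Hadamard product with the edge polynomial
`1 + t z_α + t z_β + z_α z_β`, which has no zeros there when `|t| ≤ 1`, and Hadamard products are
built from products by Asano contractions `A + B u + C v + D u v ↦ A + D w`. Hence `Q(w) ≠ 0` for
`|w| < 1`, and since `Q` is self-reciprocal (`Q(w) = w^n Q(1/w)`, reindexing by `a ↦ aᶜ`) also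
for `|w| > 1`.
-/

open Finset

-- `‖1 + t u‖² - ‖t + u‖² = (1 - t²)(1 - ‖u‖²)`
theorem norm_add_le_norm_one_add_mul {t : ℝ} (ht : |t| ≤ 1) {u : ℂ} (hu : ‖u‖ ≤ 1) :
    ‖(t : ℂ) + u‖ ≤ ‖1 + t * u‖ := by
  have ht2 : t ^ 2 ≤ 1 := by nlinarith [abs_le.1 ht]
  have hu2 : u.re ^ 2 + u.im ^ 2 ≤ 1 := by
    have := Complex.sq_norm u
    rw [Complex.normSq_apply] at this
    nlinarith [norm_nonneg u]
  rw [← sq_le_sq₀ (norm_nonneg _) (norm_nonneg _), Complex.sq_norm, Complex.sq_norm,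
    Complex.normSq_apply, Complex.normSq_apply]
  simp only [Complex.add_re, Complex.add_im, Complex.one_re, Complex.one_im, Complex.mul_re,
    Complex.mul_im, Complex.ofReal_re, Complex.ofReal_im]
  nlinarith [mul_nonneg (sub_nonneg.2 ht2) (sub_nonneg.2 hu2)]

theorem one_add_mul_add_mul_add_mul_ne_zero {t : ℝ} (ht : |t| ≤ 1) {u v : ℂ} (hu : ‖u‖ < 1)
    (hv : ‖v‖ < 1) : 1 + t * u + t * v + u * v ≠ 0 := by
  intro h
  have hpos : 0 < ‖1 + t * u‖ := by
    refine norm_pos_iff.2 fun h0 => ?_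
    have : ‖(t : ℂ) * u‖ < 1 := by
      rw [norm_mul, Complex.norm_real, Real.norm_eq_abs]
      nlinarith [norm_nonneg u, abs_nonneg t]
    rw [eq_neg_of_add_eq_zero_right h0, norm_neg, norm_one] at this
    exact this.false
  have heq : ‖1 + t * u‖ = ‖(t : ℂ) + u‖ * ‖v‖ := by
    rw [← norm_mul, ← norm_neg ((t + u) * v)]; congr 1; linear_combination h
  have := norm_add_le_norm_one_add_mul ht hu.le
  nlinarith [norm_nonneg v, norm_nonneg ((t : ℂ) + u)]

theorem asano_contraction {A B C D w : ℂ}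
    (h : ∀ u v : ℂ, ‖u‖ < 1 → ‖v‖ < 1 → A + B * u + C * v + D * u * v ≠ 0) (hw : ‖w‖ < 1) :
    A + D * w ≠ 0 := by
  intro hAw
  have hA : A ≠ 0 := by simpa using h 0 0 (by simp) (by simp)
  have hD : D ≠ 0 := by rintro rfl; exact hA (by simpa using hAw)
  -- the roots of `D X² + (B + C) X + A` have product `A / D = -w`, so one lies in the disc
  obtain ⟨u, hu⟩ := exists_quadratic_eq_zero hD (IsAlgClosed.exists_eq_mul_self _)
    (b := B + C) (c := A)
  obtain ⟨v, hv, -, huv⟩ := vieta_formula_quadratic (b := -(B + C) / D) (c := A / D) (x := u)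
    (by field_simp; linear_combination hu)
  have hnorm : ‖u‖ * ‖v‖ < 1 := by
    rw [← norm_mul, huv, show A / D = -w by field_simp; linear_combination hAw, norm_neg]
    exact hw
  rcases lt_or_ge ‖u‖ 1 with hu1 | hu1
  · exact h u u hu1 hu1 (by linear_combination hu)
  · have hv1 : ‖v‖ < 1 := by nlinarith [norm_nonneg v]
    exact h v v hv1 hv1 (by field_simp at hv; linear_combination hv)

theorem hadamard_edge_ne_zero {A B C D : ℂ} {t : ℝ} (ht : |t| ≤ 1)
    (h : ∀ u v : ℂ, ‖u‖ < 1 → ‖v‖ < 1 → A + B * u + C * v + D * u * v ≠ 0)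
    {u v : ℂ} (hu : ‖u‖ < 1) (hv : ‖v‖ < 1) : A + t * B * u + t * C * v + D * u * v ≠ 0 := by
  -- contract `u` with `u'`, then `v` with `v'`, in
  -- `(A + B u + C v + D u v)(1 + t u' + t v' + u' v')`
  have step : ∀ u v v' : ℂ, ‖u‖ < 1 → ‖v‖ < 1 → ‖v'‖ < 1 →
      (A + C * v) * (1 + t * v') + (B + D * v) * (t + v') * u ≠ 0 := by
    intro u v v' hu hv hv'
    refine asano_contraction (B := (B + D * v) * (1 + t * v')) (C := (A + C * v) * (t + v'))
      (fun u₁ u₂ hu₁ hu₂ => ?_) hu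
    convert mul_ne_zero (h u₁ v hu₁ hv) (one_add_mul_add_mul_add_mul_ne_zero ht hu₂ hv') using 1
    ring
  convert asano_contraction (A := A + t * B * u) (B := C + t * D * u) (C := t * A + B * u)
    (D := t * C + D * u) (fun v v' hv hv' => ?_) hv using 1
  · ring
  · convert step u v v' hu hv hv' using 1
    ring

def edgeFactor {ι M : Type*} [DecidableEq ι] [One M] (i j : ι) (t : M) (a : Finset ι) : M :=
  if (i ∈ a ↔ j ∈ a) then 1 else t

namespace Multiaffine

variable {ι : Type*}

def eval (S : Finset ι) (c : Finset ι → ℂ) (z : ι → ℂ) : ℂ :=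
  ∑ a ∈ S.powerset, c a * ∏ i ∈ a, z i

def NonvanishingOnPolydisc (S : Finset ι) (c : Finset ι → ℂ) : Prop :=
  ∀ z : ι → ℂ, (∀ i ∈ S, ‖z i‖ < 1) → eval S c z ≠ 0

variable {S : Finset ι} {c c' : Finset ι → ℂ} {z z' : ι → ℂ}

theorem eval_congr (hc : ∀ a ⊆ S, c a = c' a) (hz : ∀ i ∈ S, z i = z' i) :
    eval S c z = eval S c' z' :=
  sum_congr rfl fun a ha => by
    rw [mem_powerset] at ha
    rw [hc a ha, prod_congr rfl fun i hi => hz i (ha hi)]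

theorem eval_const_mul (k : ℂ) (S : Finset ι) (c : Finset ι → ℂ) (z : ι → ℂ) :
    eval S (fun a => k * c a) z = k * eval S c z := by
  simp only [eval, mul_sum, mul_assoc]

theorem nonvanishingOnPolydisc_one (S : Finset ι) : NonvanishingOnPolydisc S fun _ => 1 := by
  intro z hz
  rw [eval]
  simp_rw [one_mul, ← prod_one_add]
  refine prod_ne_zero_iff.2 fun i hi h => ?_
  have := hz i hi
  rw [eq_neg_of_add_eq_zero_right h, norm_neg, norm_one] at this
  exact this.false

variable [DecidableEq ι] {i j : ι}

def pderiv (i : ι) (c : Finset ι → ℂ) : Finset ι → ℂ :=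
  fun a => c (insert i a)

theorem eval_update_of_notMem (hi : i ∉ S) (c : Finset ι → ℂ) (z : ι → ℂ) (u : ℂ) :
    eval S c (Function.update z i u) = eval S c z :=
  eval_congr (fun _ _ => rfl) fun _ hk => Function.update_of_ne (ne_of_mem_of_not_mem hk hi) _ _

theorem eval_eq_add_mul_pderiv (hi : i ∈ S) (c : Finset ι → ℂ) (z : ι → ℂ) :
    eval S c z = eval (S.erase i) c z + z i * eval (S.erase i) (pderiv i c) z := by
  have hiS : i ∉ S.erase i := notMem_erase i S
  conv_lhs => rw [eval, ← insert_erase hi, sum_powerset_insert hiS]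
  rw [eval, eval, mul_sum]
  congr 1
  refine sum_congr rfl fun a ha => ?_
  rw [prod_insert fun h => hiS (mem_powerset.1 ha h), pderiv]
  ring

theorem eval_eq_bilinear (hij : i ≠ j) (hi : i ∈ S) (hj : j ∈ S) (c : Finset ι → ℂ)
    (z : ι → ℂ) :
    eval S c z = eval ((S.erase i).erase j) c z
      + eval ((S.erase i).erase j) (pderiv i c) z * z i
      + eval ((S.erase i).erase j) (pderiv j c) z * z j
      + eval ((S.erase i).erase j) (pderiv j (pderiv i c)) z * z i * z j := by
  have hj' : j ∈ S.erase i := mem_erase.2 ⟨hij.symm, hj⟩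
  rw [eval_eq_add_mul_pderiv hi, eval_eq_add_mul_pderiv hj', eval_eq_add_mul_pderiv hj']
  ring

theorem NonvanishingOnPolydisc.bilinear_ne_zero (hc : NonvanishingOnPolydisc S c) (hij : i ≠ j)
    (hi : i ∈ S) (hj : j ∈ S) (hz : ∀ k ∈ S, ‖z k‖ < 1) {u v : ℂ} (hu : ‖u‖ < 1)
    (hv : ‖v‖ < 1) :
    eval ((S.erase i).erase j) c z
      + eval ((S.erase i).erase j) (pderiv i c) z * u
      + eval ((S.erase i).erase j) (pderiv j c) z * v
      + eval ((S.erase i).erase j) (pderiv j (pderiv i c)) z * u * v ≠ 0 := by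
  have hiT : i ∉ (S.erase i).erase j := fun h => notMem_erase i S (mem_of_mem_erase h)
  have hjT : j ∉ (S.erase i).erase j := notMem_erase j _
  have hz' : ∀ k ∈ S, ‖Function.update (Function.update z i u) j v k‖ < 1 := by
    intro k hk
    rcases eq_or_ne k j with rfl | hkj
    · simpa
    rcases eq_or_ne k i with rfl | hki
    · simpa [hkj]
    · simpa [hkj, hki] using hz k hk
  have := hc _ hz'
  rw [eval_eq_bilinear hij hi hj] at this
  simpa only [eval_update_of_notMem hiT, eval_update_of_notMem hjT, Function.update_self,
    Function.update_of_ne hij] using this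

theorem NonvanishingOnPolydisc.mul_edgeFactor (hc : NonvanishingOnPolydisc S c) (hij : i ≠ j)
    (hi : i ∈ S) (hj : j ∈ S) {t : ℝ} (ht : |t| ≤ 1) :
    NonvanishingOnPolydisc S fun a => c a * edgeFactor i j (t : ℂ) a := by
  intro z hz
  rw [eval_eq_bilinear hij hi hj]
  set T := (S.erase i).erase j
  have hnot : ∀ a ⊆ T, i ∉ a ∧ j ∉ a := fun a ha =>
    ⟨fun h => notMem_erase i S (mem_of_mem_erase (ha h)), fun h => notMem_erase j _ (ha h)⟩
  have e0 : eval T (fun a => c a * edgeFactor i j (t : ℂ) a) z = eval T c z :=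
    eval_congr (fun a ha => by simp [edgeFactor, hnot a ha]) fun _ _ => rfl
  have e1 : eval T (pderiv i fun a => c a * edgeFactor i j (t : ℂ) a) z
      = t * eval T (pderiv i c) z := by
    rw [← eval_const_mul]
    exact eval_congr (fun a ha => by simp [pderiv, edgeFactor, hnot a ha, hij.symm, mul_comm])
      fun _ _ => rfl
  have e2 : eval T (pderiv j fun a => c a * edgeFactor i j (t : ℂ) a) z
      = t * eval T (pderiv j c) z := by
    rw [← eval_const_mul]
    exact eval_congr (fun a ha => by simp [pderiv, edgeFactor, hnot a ha, hij, mul_comm])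
      fun _ _ => rfl
  have e3 : eval T (pderiv j (pderiv i fun a => c a * edgeFactor i j (t : ℂ) a)) z
      = eval T (pderiv j (pderiv i c)) z :=
    eval_congr (fun a ha => by simp [pderiv, edgeFactor, hnot a ha]) fun _ _ => rfl
  rw [e0, e1, e2, e3]
  exact hadamard_edge_ne_zero ht (fun u v => hc.bilinear_ne_zero hij hi hj hz) (hz i hi) (hz j hj)

theorem nonvanishingOnPolydisc_prod_edgeFactor (F : Finset (ι × ι))
    (hF : ∀ p ∈ F, p.1 ≠ p.2 ∧ p.1 ∈ S ∧ p.2 ∈ S) (w : ι × ι → ℝ) (hw : ∀ p ∈ F, |w p| ≤ 1) :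
    NonvanishingOnPolydisc S fun a => ∏ p ∈ F, edgeFactor p.1 p.2 (w p : ℂ) a := by
  induction F using Finset.induction_on with
  | empty => simpa using nonvanishingOnPolydisc_one S
  | insert p F hp ih =>
    obtain ⟨hne, h1, h2⟩ := hF p (mem_insert_self p F)
    simp_rw [prod_insert hp, mul_comm (edgeFactor p.1 p.2 _ _)]
    exact (ih (fun q hq => hF q (mem_insert_of_mem hq)) fun q hq => hw q (mem_insert_of_mem hq)
      ).mul_edgeFactor hne h1 h2 (hw p (mem_insert_self p F))

end Multiaffine

theorem Finset.prod_eq_prod_filter_lt_mul_swap {ι M : Type*} [Fintype ι] [LinearOrder ι]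
    [CommMonoid M] (f : ι × ι → M) (hf : ∀ α, f (α, α) = 1) :
    ∏ p, f p = ∏ p : ι × ι with p.1 < p.2, f p * f p.swap := by
  have hgt : ∏ p : ι × ι with ¬p.1 < p.2, f p = ∏ p : ι × ι with p.1 < p.2, f p.swap := by
    rw [← prod_subset (s₁ := {p | p.2 < p.1}) (fun p => by simpa using le_of_lt)]
    · exact prod_equiv (Equiv.prodComm ι ι) (by simp) (by simp)
    · intro p hp hp'
      simp only [mem_filter, mem_univ, true_and, not_lt] at hp hp'
      rw [← Prod.mk.eta (p := p), le_antisymm hp hp', hf]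
  rw [prod_mul_distrib, ← hgt, prod_filter_mul_prod_filter_not]

section LeeYang

variable {ι : Type*} [Fintype ι]

def cutProduct [DecidableEq ι] {M : Type*} [CommMonoid M] (x : ι → ι → M) (a : Finset ι) : M :=
  ∏ α ∈ a, ∏ β ∈ aᶜ, x α β

def leeYangPoly [DecidableEq ι] (x : ι → ι → ℝ) (w : ℂ) : ℂ :=
  ∑ a : Finset ι, ((cutProduct x a : ℝ) : ℂ) * w ^ a.card

theorem cutProduct_compl [DecidableEq ι] {M : Type*} [CommMonoid M] {x : ι → ι → M}
    (hx : ∀ α β, x α β = x β α) (a : Finset ι) : cutProduct x aᶜ = cutProduct x a := by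
  rw [cutProduct, cutProduct, compl_compl, prod_comm]
  simp_rw [hx]

theorem cutProduct_eq_prod_edgeFactor [LinearOrder ι] {M : Type*} [CommMonoid M]
    {x : ι → ι → M} (hx : ∀ α β, x α β = x β α) (a : Finset ι) :
    cutProduct x a = ∏ p : ι × ι with p.1 < p.2, edgeFactor p.1 p.2 (x p.1 p.2) a := by
  have hcut : cutProduct x a = ∏ p : ι × ι, if p.1 ∈ a ∧ p.2 ∉ a then x p.1 p.2 else 1 := by
    rw [cutProduct, ← prod_product', ← prod_filter]
    congr 1
    ext p
    simp
  rw [hcut, prod_eq_prod_filter_lt_mul_swap _ (by simp)]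
  refine prod_congr rfl fun p _ => ?_
  by_cases h1 : p.1 ∈ a <;> by_cases h2 : p.2 ∈ a <;> simp [edgeFactor, h1, h2, hx p.2]

theorem leeYangPoly_eq_eval [LinearOrder ι] (x : ι → ι → ℝ) (hx : ∀ α β, x α β = x β α)
    (w : ℂ) : leeYangPoly x w = Multiaffine.eval univ
      (fun a => ∏ p : ι × ι with p.1 < p.2, edgeFactor p.1 p.2 (x p.1 p.2 : ℂ) a)
      (fun _ => w) := by
  rw [leeYangPoly, Multiaffine.eval, powerset_univ]
  refine sum_congr rfl fun a _ => ?_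
  rw [prod_const, ← cutProduct_eq_prod_edgeFactor (x := fun α β => (x α β : ℂ))
    (fun α β => by rw [hx]), cutProduct, cutProduct]
  push_cast
  rfl

theorem leeYangPoly_ne_zero [LinearOrder ι] {x : ι → ι → ℝ} (hx : ∀ α β, x α β = x β α)
    (hbound : ∀ α β, α ≠ β → |x α β| ≤ 1) {w : ℂ} (hw : ‖w‖ < 1) : leeYangPoly x w ≠ 0 := by
  rw [leeYangPoly_eq_eval x hx]
  refine Multiaffine.nonvanishingOnPolydisc_prod_edgeFactor _ (fun p hp => ?_)
    (fun p => x p.1 p.2) (fun p hp => hbound _ _ ?_) _ fun _ _ => hw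
  · simp only [mem_filter] at hp
    exact ⟨hp.2.ne, mem_univ _, mem_univ _⟩
  · exact (mem_filter.1 hp).2.ne

theorem leeYangPoly_eq_pow_mul_inv [DecidableEq ι] {x : ι → ι → ℝ}
    (hx : ∀ α β, x α β = x β α) {w : ℂ} (hw : w ≠ 0) :
    leeYangPoly x w = w ^ Fintype.card ι * leeYangPoly x w⁻¹ := by
  rw [leeYangPoly, ← Equiv.sum_comp (Function.Involutive.toPerm _ compl_involutive), leeYangPoly,
    mul_sum]
  refine sum_congr rfl fun a _ => ?_
  rw [Function.Involutive.coe_toPerm, cutProduct_compl hx, card_compl,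
    pow_sub₀ w hw (card_le_univ a), inv_pow]
  ring

theorem sum_range_eq_leeYangPoly [DecidableEq ι] (x : ι → ι → ℝ) (w : ℂ) :
    ∑ γ ∈ range (Fintype.card ι + 1),
      ((∑ a ∈ powersetCard γ (univ : Finset ι), ∏ α ∈ a, ∏ β ∈ aᶜ, x α β : ℝ) : ℂ) * w ^ γ
      = leeYangPoly x w := by
  rw [leeYangPoly, ← powerset_univ, sum_powerset, card_univ]
  refine sum_congr rfl fun γ _ => ?_
  push_cast
  rw [sum_mul]
  refine sum_congr rfl fun a ha => ?_
  rw [(mem_powersetCard.1 ha).2, cutProduct]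
  push_cast
  rfl

end LeeYang

theorem lee_yang_circle_general (n : ℕ) (x : Fin n → Fin n → ℝ)
    (hsymm : ∀ α β, x α β = x β α)
    (hbound : ∀ α β, α ≠ β → |x α β| ≤ 1)
    (z : ℂ)
    (hz : ∑ γ ∈ Finset.range (n + 1),
        ((∑ a ∈ Finset.powersetCard γ (Finset.univ : Finset (Fin n)),
            ∏ α ∈ a, ∏ β ∈ aᶜ, x α β : ℝ) : ℂ) * z ^ γ = 0) :
    ‖z‖ = 1 := by
  have hpoly : leeYangPoly x z = 0 := by
    rw [← sum_range_eq_leeYangPoly, Fintype.card_fin, hz]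
  have hdisc : ∀ w : ℂ, ‖w‖ < 1 → leeYangPoly x w ≠ 0 := fun _ => leeYangPoly_ne_zero hsymm hbound
  have hz0 : z ≠ 0 := by
    rintro rfl
    exact hdisc 0 (by simp) hpoly
  have hinv : leeYangPoly x z⁻¹ = 0 := by
    have := leeYangPoly_eq_pow_mul_inv hsymm hz0
    rwa [hpoly, zero_eq_mul, or_iff_right (pow_ne_zero _ hz0)] at this
  refine le_antisymm (not_lt.1 fun h => hdisc z⁻¹ ?_ hinv) (not_lt.1 fun h => hdisc z h hpoly)
  rw [norm_inv]
  exact inv_lt_one_of_one_lt₀ h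

/-- **Lee–Yang circle theorem**: every complex root of the polynomial
`Q(z) = Σ_γ Q_γ z^γ`, where `Q_γ = Σ_{|a|=γ} Π_{α∈a} Π_{β∉a} x (α, β)` and where the
symmetric real matrix `x` has entries of absolute value at most `1` off the diagonal,
lies on the unit circle. -/
theorem lee_yang_circle (n : ℕ) (hn : 1 ≤ n) (x : Fin n → Fin n → ℝ)
    (hsymm : ∀ α β, x α β = x β α)
    (hbound : ∀ α β, α ≠ β → |x α β| ≤ 1)
    (z : ℂ)
    (hz : ∑ γ ∈ Finset.range (n + 1),
        ((∑ a ∈ Finset.powersetCard γ (Finset.univ : Finset (Fin n)),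
            ∏ α ∈ a, ∏ β ∈ aᶜ, x α β : ℝ) : ℂ) * z ^ γ = 0) :
    ‖z‖ = 1 :=
  lee_yang_circle_general n x hsymm hbound z hz
end

section
/- Let V be a nonempty finite set and let J, J' : V → V → ℝ be symmetric functions with zero diagonal such that J_{pq} ≥ |J'_{pq}| for all p, q (in particular J is ferromagnetic). Let ⟨·⟩_J and ⟨·⟩_{J'} denote the zero-field Gibbs expectations with weights exp((1/2)Σ_{p,q} J_{pq} σ_p σ_q) and exp((1/2)Σ_{p,q} J'_{pq} σ_p σ_q), respectively. Then for every finite subset A ⊆ V, ⟨σ_A⟩_J ≥ ⟨σ_A⟩_{J'}. -/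
/-!
Ginibre's duplicated-variable argument. Multiplying out the two partition functions,
`Z_J Z_{J'} (⟨σ_A⟩_J - ⟨σ_A⟩_{J'}) = ∑_{σ,τ} (σ_A - τ_A) w_J(σ) w_{J'}(τ)`. Writing `τ = σ u`
(pointwise product with a third configuration `u`) turns this into
`∑_u (1 - u_A) ∑_σ σ_A w_{K_u}(σ)` with couplings `K_u(p,q) = J_{pq} + J'_{pq} u_p u_q ≥ 0`.
Each `1 - u_A` is nonnegative, and each inner sum is nonnegative by Griffiths' first inequality:
expanding `exp(K σ_p σ_q / 2) = cosh(K/2) + sinh(K/2) σ_p σ_q` writes the weight as a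
nonnegative combination of spin monomials, and a spin monomial sums to `0` or `2^|V|`.
-/

open Finset

/-- The spin value (±1) associated to a Boolean configuration. -/
noncomputable def spin {V : Type*} (s : V → Bool) : V → ℝ :=
  fun p => if s p then 1 else -1

/-- Zero-field Boltzmann weight of a spin configuration for couplings `J`. -/
noncomputable def zfWeight {V : Type*} [Fintype V] (J : V → V → ℝ) (s : V → Bool) : ℝ :=
  Real.exp ((1 / 2) * ∑ p, ∑ q, J p q * spin s p * spin s q)

/-- Zero-field Gibbs expectation of an observable `f` for couplings `J`. -/
noncomputable def zfExpect {V : Type*} [Fintype V] [DecidableEq V]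
    (J : V → V → ℝ) (f : (V → ℝ) → ℝ) : ℝ :=
  (∑ s : V → Bool, f (spin s) * zfWeight J s) / ∑ s : V → Bool, zfWeight J s

open Real

section Spin

variable {V : Type*}

lemma abs_spin (s : V → Bool) (p : V) : |spin s p| = 1 := by
  unfold spin; cases s p <;> norm_num

lemma spin_beq (s u : V → Bool) (p : V) :
    spin (fun q => s q == u q) p = spin s p * spin u p := by
  unfold spin; rcases hs : s p <;> rcases hu : u p <;> simp [hs, hu]

lemma involutive_pointwise_beq (s : V → Bool) :
    Function.Involutive fun u : V → Bool => fun p => s p == u p := by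
  intro u; funext p; rcases hs : s p <;> rcases hu : u p <;> simp [hs, hu]

lemma prod_spin_le_one (u : V → Bool) (A : Finset V) : ∏ p ∈ A, spin u p ≤ 1 :=
  (le_abs_self _).trans (by rw [abs_prod, prod_eq_one fun p _ => abs_spin u p])

variable [Fintype V] [DecidableEq V]

lemma sum_prod_spin_pow_nonneg (n : V → ℕ) : 0 ≤ ∑ s : V → Bool, ∏ p, spin s p ^ n p := by
  simp only [spin]
  rw [← Fintype.prod_sum fun p (b : Bool) => (if b then (1 : ℝ) else -1) ^ n p]
  refine prod_nonneg fun p _ => ?_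
  rw [Fintype.sum_bool]
  rcases Nat.even_or_odd (n p) with h | h <;> simp [h.neg_one_pow]

lemma sum_prod_spin_nonneg {ι : Type*} (I : Finset ι) (g : ι → V) :
    0 ≤ ∑ s : V → Bool, ∏ i ∈ I, spin s (g i) := by
  have hfiber (s : V → Bool) :
      ∏ i ∈ I, spin s (g i) = ∏ p, spin s p ^ #{i ∈ I | g i = p} := by
    rw [← prod_fiberwise_of_maps_to fun i _ => mem_univ (g i)]
    refine prod_congr rfl fun p _ => ?_
    rw [prod_congr rfl fun i hi => congrArg (spin s) (mem_filter.mp hi).2, prod_const]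
  simp_rw [hfiber]
  exact sum_prod_spin_pow_nonneg _

end Spin

lemma exp_mul_eq_cosh_add_sinh_mul (a : ℝ) {t : ℝ} (ht : |t| = 1) :
    exp (a * t) = cosh a + sinh a * t := by
  rcases (abs_eq zero_le_one).mp ht with rfl | rfl
  · rw [mul_one, mul_one, cosh_add_sinh]
  · rw [mul_neg_one, mul_neg_one, ← sub_eq_add_neg, cosh_sub_sinh]

section Griffiths

variable {V : Type*} [Fintype V]

lemma zfWeight_eq_prod (K : V → V → ℝ) (s : V → Bool) :
    zfWeight K s = ∏ e : V × V,
      (sinh (K e.1 e.2 / 2) * (spin s e.1 * spin s e.2) + cosh (K e.1 e.2 / 2)) := by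
  rw [zfWeight, ← Fintype.sum_prod_type', mul_sum, exp_sum]
  refine prod_congr rfl fun e _ => ?_
  have hpair : |spin s e.1 * spin s e.2| = 1 := by rw [abs_mul, abs_spin, abs_spin, one_mul]
  rw [← mul_assoc, ← mul_assoc, mul_comm _ (K _ _), mul_assoc, ← div_eq_mul_one_div,
    exp_mul_eq_cosh_add_sinh_mul _ hpair, add_comm]

/-- Griffiths' first inequality. -/
lemma sum_prod_spin_mul_zfWeight_nonneg [DecidableEq V] (K : V → V → ℝ)
    (hK : ∀ p q, 0 ≤ K p q) (A : Finset V) :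
    0 ≤ ∑ s : V → Bool, (∏ p ∈ A, spin s p) * zfWeight K s := by
  simp_rw [zfWeight_eq_prod, Fintype.prod_add, mul_sum]
  rw [sum_comm]
  refine sum_nonneg fun T _ => ?_
  set c := (∏ e ∈ T, sinh (K e.1 e.2 / 2)) * ∏ e ∈ Tᶜ, cosh (K e.1 e.2 / 2)
  have hc : 0 ≤ c := mul_nonneg
    (prod_nonneg fun e _ => sinh_nonneg_iff.mpr (div_nonneg (hK _ _) zero_le_two))
    (prod_nonneg fun e _ => (cosh_pos _).le)
  -- `σ_A ∏_{(p,q) ∈ T} σ_p σ_q` as one monomial, with factors indexed by `A ⊕ T ⊕ T`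
  have hmonomial (s : V → Bool) :
      (∏ p ∈ A, spin s p) * ((∏ e ∈ T, sinh (K e.1 e.2 / 2) * (spin s e.1 * spin s e.2)) *
        ∏ e ∈ Tᶜ, cosh (K e.1 e.2 / 2)) =
      c * ∏ i ∈ A.disjSum (T.disjSum T), spin s (Sum.elim id (Sum.elim Prod.fst Prod.snd) i) := by
    simp only [c, prod_disjSum, prod_mul_distrib, Sum.elim_inl, Sum.elim_inr, id_eq]
    ring
  simp_rw [hmonomial, ← mul_sum]
  exact mul_nonneg hc (sum_prod_spin_nonneg _ _)

end Griffiths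

section Duplication

variable {V : Type*}

noncomputable def twistedCoupling (J J' : V → V → ℝ) (u : V → Bool) (p q : V) : ℝ :=
  J p q + J' p q * spin u p * spin u q

lemma twistedCoupling_nonneg {J J' : V → V → ℝ} (hJ : ∀ p q, |J' p q| ≤ J p q)
    (u : V → Bool) (p q : V) : 0 ≤ twistedCoupling J J' u p q := by
  have habs : |J' p q * spin u p * spin u q| = |J' p q| := by
    rw [abs_mul, abs_mul, abs_spin, abs_spin, mul_one, mul_one]
  rw [twistedCoupling]
  linarith [hJ p q, neg_abs_le (J' p q * spin u p * spin u q)]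

lemma zfWeight_mul_zfWeight_beq [Fintype V] (J J' : V → V → ℝ) (s u : V → Bool) :
    zfWeight J s * zfWeight J' (fun p => s p == u p) = zfWeight (twistedCoupling J J' u) s := by
  simp only [zfWeight, ← exp_add, ← mul_add, ← sum_add_distrib, spin_beq, twistedCoupling]
  congr 2
  refine sum_congr rfl fun p _ => sum_congr rfl fun q _ => ?_
  ring

lemma sum_sum_sub_mul_zfWeight_mul_zfWeight [Fintype V] [DecidableEq V] (J J' : V → V → ℝ)
    (A : Finset V) :
    ∑ s : V → Bool, ∑ t : V → Bool,
      (∏ p ∈ A, spin s p - ∏ p ∈ A, spin t p) * zfWeight J s * zfWeight J' t =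
    ∑ u : V → Bool, (1 - ∏ p ∈ A, spin u p) *
      ∑ s : V → Bool, (∏ p ∈ A, spin s p) * zfWeight (twistedCoupling J J' u) s := by
  simp_rw [mul_sum]
  conv_rhs => rw [sum_comm]
  refine sum_congr rfl fun s _ => ?_
  refine (Fintype.sum_bijective _ (involutive_pointwise_beq s).bijective _ _ fun u => ?_).symm
  rw [mul_assoc, zfWeight_mul_zfWeight_beq]
  simp only [spin_beq, prod_mul_distrib]
  ring

end Duplication

theorem correlation_comparison_general {V : Type*} [Fintype V] [DecidableEq V]
    (J J' : V → V → ℝ)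
    (hJ : ∀ p q, |J' p q| ≤ J p q)
    (A : Finset V) :
    zfExpect J' (fun σ => ∏ p ∈ A, σ p) ≤ zfExpect J (fun σ => ∏ p ∈ A, σ p) := by
  have hZ (K : V → V → ℝ) : 0 < ∑ s : V → Bool, zfWeight K s :=
    sum_pos (fun s _ => exp_pos _) univ_nonempty
  rw [zfExpect, zfExpect, div_le_div_iff₀ (hZ J') (hZ J), ← sub_nonneg, sum_mul_sum,
    sum_mul_sum, sum_comm (s := univ) (t := univ) (f := fun t s => _ * zfWeight J s)]
  have hdiff : ∀ s t : V → Bool,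
      (∏ p ∈ A, spin s p) * zfWeight J s * zfWeight J' t -
        (∏ p ∈ A, spin t p) * zfWeight J' t * zfWeight J s =
      (∏ p ∈ A, spin s p - ∏ p ∈ A, spin t p) * zfWeight J s * zfWeight J' t := by
    intros; ring
  simp_rw [← sum_sub_distrib, hdiff, sum_sum_sub_mul_zfWeight_mul_zfWeight]
  exact sum_nonneg fun u _ => mul_nonneg (sub_nonneg.mpr (prod_spin_le_one u A))
    (sum_prod_spin_mul_zfWeight_nonneg _ (twistedCoupling_nonneg hJ u) A)

/-- If `J_{pq} ≥ |J'_{pq}|` for all `p, q`, then `⟨σ_A⟩_J ≥ ⟨σ_A⟩_{J'}` for every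
finite set `A` of sites. -/
theorem correlation_comparison {V : Type*} [Fintype V] [DecidableEq V] [Nonempty V]
    (J J' : V → V → ℝ)
    (hsymm : ∀ p q, J p q = J q p) (hdiag : ∀ p, J p p = 0)
    (hsymm' : ∀ p q, J' p q = J' q p) (hdiag' : ∀ p, J' p p = 0)
    (hJ : ∀ p q, |J' p q| ≤ J p q)
    (A : Finset V) :
    zfExpect J' (fun σ => ∏ p ∈ A, σ p) ≤ zfExpect J (fun σ => ∏ p ∈ A, σ p) :=
  correlation_comparison_general J J' hJ A
end

section
/- (High-temperature expansion.) Let G be a finite simple graph with vertex set V and edge set E, and let J : E → ℝ. Then Σ_{σ : V → {−1,+1}} Π_{e = {u,v} ∈ E} exp(J_e σ_u σ_v) = 2^{|V|} · (Π_{e∈E} cosh J_e) · Σ_{C ⊆ E, every vertex of V is incident to an even number of edges of C} Π_{e∈C} tanh J_e. -/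
open Finset

/-- The product `σ_u σ_v` over the two endpoints of an unordered pair. -/
noncomputable def edgeSpin {V : Type*} (s : V → Bool) : Sym2 V → ℝ :=
  Sym2.lift ⟨fun u v => spin s u * spin s v, fun u v => mul_comm _ _⟩

/-!
Since `σ_u σ_v = ±1`, each Boltzmann weight factors as
`exp (J_e σ_u σ_v) = cosh J_e · (1 + tanh J_e · σ_u σ_v)`. Expanding the product of the
`1 + tanh J_e · σ_u σ_v` over the edges gives a sum over edge subsets `C` of
`Π_{e ∈ C} tanh J_e · Π_v σ_v ^ deg_C v`, and summing over the spins kills every `C` having a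
vertex of odd degree, while each even `C` contributes `2 ^ |V|`.
-/

theorem exp_mul_eq_cosh_mul_one_add_tanh_mul {J x : ℝ} (hx : x = 1 ∨ x = -1) :
    Real.exp (J * x) = Real.cosh J * (1 + Real.tanh J * x) := by
  rcases hx with rfl | rfl
  · rw [Real.tanh_eq_sinh_div_cosh, mul_one, ← Real.cosh_add_sinh]
    field_simp
  · rw [Real.tanh_eq_sinh_div_cosh, mul_neg_one, ← Real.cosh_sub_sinh]
    field_simp
    ring

section Spins

variable {V : Type*}

theorem edgeSpin_eq_one_or_neg_one (s : V → Bool) (e : Sym2 V) :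
    edgeSpin s e = 1 ∨ edgeSpin s e = -1 := by
  induction e using Sym2.ind with
  | _ u v =>
    change spin s u * spin s v = 1 ∨ spin s u * spin s v = -1
    unfold spin
    cases s u <;> cases s v <;> norm_num

variable [Fintype V] [DecidableEq V]

theorem edgeSpin_eq_prod_pow (s : V → Bool) {e : Sym2 V} (he : ¬ e.IsDiag) :
    edgeSpin s e = ∏ v, spin s v ^ (if v ∈ e then 1 else 0) := by
  induction e using Sym2.ind with
  | _ u v =>
    have huv : u ≠ v := by simpa using he
    simp only [pow_ite, pow_one, pow_zero]
    rw [← prod_filter, show ({w | w ∈ s(u, v)} : Finset V) = {u, v} by ext; simp,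
      prod_pair huv]
    rfl

theorem prod_edgeSpin_eq_prod_spin_pow (s : V → Bool) {C : Finset (Sym2 V)}
    (hC : ∀ e ∈ C, ¬ e.IsDiag) :
    ∏ e ∈ C, edgeSpin s e = ∏ v, spin s v ^ (C.filter (fun e => v ∈ e)).card := by
  rw [prod_congr rfl fun e he => edgeSpin_eq_prod_pow s (hC e he), prod_comm]
  simp_rw [prod_pow_eq_pow_sum, card_filter]

theorem sum_prod_spin_pow (d : V → ℕ) :
    ∑ s : V → Bool, ∏ v, spin s v ^ d v
      = if ∀ v, Even (d v) then (2 : ℝ) ^ Fintype.card V else 0 := by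
  have sum_bool : ∀ n : ℕ, ∑ b : Bool, (if b then (1 : ℝ) else -1) ^ n
      = if Even n then 2 else 0 := by
    intro n
    rcases n.even_or_odd with hn | hn
    · simp [hn, hn.neg_one_pow]
    · simp [Nat.not_even_iff_odd.mpr hn, hn.neg_one_pow]
  calc ∑ s : V → Bool, ∏ v, spin s v ^ d v
      = ∏ v, ∑ b : Bool, (if b then (1 : ℝ) else -1) ^ d v := by
        rw [Fintype.prod_sum]; rfl
    _ = ∏ v, if Even (d v) then (2 : ℝ) else 0 := by simp_rw [sum_bool]
    _ = _ := by simp only [prod_ite_zero, prod_const, card_univ, mem_univ, true_imp_iff]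

theorem sum_prod_edgeSpin {C : Finset (Sym2 V)} (hC : ∀ e ∈ C, ¬ e.IsDiag) :
    ∑ s : V → Bool, ∏ e ∈ C, edgeSpin s e
      = if ∀ v, Even (C.filter (fun e => v ∈ e)).card then (2 : ℝ) ^ Fintype.card V
        else 0 := by
  simp_rw [prod_edgeSpin_eq_prod_spin_pow _ hC, sum_prod_spin_pow]

theorem sum_prod_one_add_mul_edgeSpin (t : Sym2 V → ℝ) {E : Finset (Sym2 V)}
    (hE : ∀ e ∈ E, ¬ e.IsDiag) :
    ∑ s : V → Bool, ∏ e ∈ E, (1 + t e * edgeSpin s e)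
      = 2 ^ Fintype.card V *
        ∑ C ∈ E.powerset.filter (fun C => ∀ v, Even (C.filter (fun e => v ∈ e)).card),
          ∏ e ∈ C, t e := by
  simp_rw [prod_one_add, prod_mul_distrib]
  rw [sum_comm]
  simp_rw [← mul_sum]
  rw [sum_filter, mul_sum]
  refine sum_congr rfl fun C hC => ?_
  rw [sum_prod_edgeSpin fun e he => hE e (mem_powerset.mp hC he)]
  split_ifs <;> ring

end Spins

/-- **High-temperature expansion** of the Ising partition function:
`Σ_σ Π_{e∈E} exp(J_e σ_u σ_v)
  = 2^{|V|} · Π_{e∈E} cosh J_e · Σ_{even C ⊆ E} Π_{e∈C} tanh J_e`. -/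
theorem high_temperature_expansion {V : Type*} [Fintype V] [DecidableEq V]
    (G : SimpleGraph V) [DecidableRel G.Adj] (J : Sym2 V → ℝ) :
    ∑ s : V → Bool, ∏ e ∈ G.edgeFinset, Real.exp (J e * edgeSpin s e)
      = 2 ^ Fintype.card V * (∏ e ∈ G.edgeFinset, Real.cosh (J e)) *
        ∑ C ∈ G.edgeFinset.powerset.filter
            (fun C => ∀ v : V, Even ((C.filter (fun e => v ∈ e)).card)),
          ∏ e ∈ C, Real.tanh (J e) := by
  have hE : ∀ e ∈ G.edgeFinset, ¬ e.IsDiag := fun e he =>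
    G.not_isDiag_of_mem_edgeSet (SimpleGraph.mem_edgeFinset.mp he)
  simp_rw [exp_mul_eq_cosh_mul_one_add_tanh_mul (edgeSpin_eq_one_or_neg_one _ _),
    prod_mul_distrib]
  rw [← mul_sum, sum_prod_one_add_mul_edgeSpin _ hE]
  ring
end

section
/- Let N ≥ 1, let Q be an N×N real symmetric matrix with all entries strictly positive, let F and G be N×N diagonal matrices all of whose diagonal entries lie in {0, 1}, and let i be an even natural number. Then the limits L_F = lim_{s→∞} tr(F Q^s)/tr(Q^s), L_G = lim_{s→∞} tr(G Q^s)/tr(Q^s), L_{FG} = lim_{s→∞} tr(F Q^i G Q^s)/tr(Q^{s+i}), L_{FF} = lim_{s→∞} tr(F Q^i F Q^s)/tr(Q^{s+i}) and L_{GG} = lim_{s→∞} tr(G Q^i G Q^s)/tr(Q^{s+i}) all exist, L_{FF} − L_F² ≥ 0 and L_{GG} − L_G² ≥ 0, and L_{FG} − L_F·L_G ≤ sqrt( (L_{FF} − L_F²)·(L_{GG} − L_G²) ). -/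
/-!
Diagonalise `Q = U diag(μ) Uᵀ`. Since `Q` has positive entries, its largest eigenvalue
`λ = μ k₀` is positive and `|μ k| < λ` for `k ≠ k₀` (Perron–Frobenius): for a unit eigenvector
`u` with `|μ| = λ`, the vector `|u|` maximises the Rayleigh quotient, so it is a
`λ`-eigenvector with positive entries, and equality in `|Q u| ≤ Q |u|` forces `u` to have
constant sign; two such eigenvectors cannot be orthogonal. Hence in
`tr (A Q^s) = ∑ k, (Uᵀ A U) k k * μ k ^ s` the `k₀` term dominates. With
`x = Uᵀ F U e_{k₀}`, `y = Uᵀ G U e_{k₀}` and the weights `c k = (μ k / λ) ^ i ≥ 0` (`i` even),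
the limits are `L_F = x k₀` and `L_{FG} = ∑ k, c k * x k * y k`; as `c k₀ = 1`,
`L_{FG} - L_F L_G = ∑_{k ≠ k₀} c k * x k * y k`, and the claim is Cauchy–Schwarz for this
nonnegatively weighted sum.
-/

open Filter Matrix

section WeightedCauchySchwarz

variable {ι : Type*}

theorem Finset.sum_weighted_mul_le_sqrt (s : Finset ι) {c : ι → ℝ} (hc : ∀ k ∈ s, 0 ≤ c k)
    (x y : ι → ℝ) :
    ∑ k ∈ s, c k * (x k * y k) ≤
      √((∑ k ∈ s, c k * (x k * x k)) * ∑ k ∈ s, c k * (y k * y k)) := by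
  refine (le_abs_self _).trans (Real.abs_le_sqrt ?_)
  exact Finset.sum_sq_le_sum_mul_sum_of_sq_le_mul s
    (fun k hk => mul_nonneg (hc k hk) (mul_self_nonneg _))
    (fun k hk => mul_nonneg (hc k hk) (mul_self_nonneg _)) fun k _ => le_of_eq (by ring)

variable [Fintype ι] [DecidableEq ι] {c : ι → ℝ} {k₀ : ι}

theorem sum_mul_mul_sub_eq_sum_erase (hc₀ : c k₀ = 1) (x y : ι → ℝ) :
    ∑ k, c k * (x k * y k) - x k₀ * y k₀ = ∑ k ∈ Finset.univ.erase k₀, c k * (x k * y k) := by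
  rw [Finset.sum_erase_eq_sub (Finset.mem_univ k₀), hc₀, one_mul]

theorem sum_mul_mul_sub_sq_nonneg (hc : ∀ k, 0 ≤ c k) (hc₀ : c k₀ = 1) (x : ι → ℝ) :
    0 ≤ ∑ k, c k * (x k * x k) - x k₀ ^ 2 := by
  rw [sq, sum_mul_mul_sub_eq_sum_erase hc₀]
  exact Finset.sum_nonneg fun k _ => mul_nonneg (hc k) (mul_self_nonneg _)

theorem sum_mul_mul_sub_le_sqrt (hc : ∀ k, 0 ≤ c k) (hc₀ : c k₀ = 1) (x y : ι → ℝ) :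
    ∑ k, c k * (x k * y k) - x k₀ * y k₀ ≤
      √((∑ k, c k * (x k * x k) - x k₀ ^ 2) * (∑ k, c k * (y k * y k) - y k₀ ^ 2)) := by
  simp only [sq, sum_mul_mul_sub_eq_sum_erase hc₀]
  exact Finset.sum_weighted_mul_le_sqrt _ (fun k _ => hc k) x y

end WeightedCauchySchwarz

theorem tendsto_sum_mul_pow_div_sum_mul_pow {ι : Type*} [Fintype ι] {μ : ι → ℝ} {k₀ : ι}
    (hμ₀ : 0 < μ k₀) (hdom : ∀ k ≠ k₀, |μ k| < μ k₀) (c : ι → ℝ) {d : ι → ℝ} (hd : d k₀ ≠ 0) :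
    Tendsto (fun s : ℕ => (∑ k, c k * μ k ^ s) / ∑ k, d k * μ k ^ s) atTop
      (nhds (c k₀ / d k₀)) := by
  classical
  have hnormalized (e : ι → ℝ) :
      Tendsto (fun s : ℕ => ∑ k, e k * (μ k / μ k₀) ^ s) atTop (nhds (e k₀)) := by
    have hterm (k : ι) : Tendsto (fun s : ℕ => e k * (μ k / μ k₀) ^ s) atTop
        (nhds (if k = k₀ then e k else 0)) := by
      split_ifs with hk
      · subst hk
        simp [div_self hμ₀.ne']
      · have hratio : |μ k / μ k₀| < 1 := by
          rw [abs_div, abs_of_pos hμ₀, div_lt_one hμ₀]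
          exact hdom k hk
        simpa using (tendsto_pow_atTop_nhds_zero_of_abs_lt_one hratio).const_mul (e k)
    simpa using tendsto_finsetSum Finset.univ fun k _ => hterm k
  refine ((hnormalized c).div (hnormalized d) hd).congr fun s => ?_
  have hscale (e : ι → ℝ) : ∑ k, e k * (μ k / μ k₀) ^ s = (∑ k, e k * μ k ^ s) / μ k₀ ^ s := by
    simp only [Finset.sum_div, div_pow, mul_div_assoc]
  rw [Pi.div_apply, hscale, hscale, div_div_div_cancel_right₀ (pow_ne_zero s hμ₀.ne')]

namespace Matrix

section Nonneg
variable {ι : Type*} [Fintype ι] {Q : Matrix ι ι ℝ}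

theorem mulVec_pos_of_pos (hQ : ∀ a b, 0 < Q a b) {x : ι → ℝ} (hx : 0 ≤ x) (hx₀ : x ≠ 0)
    (a : ι) : 0 < (Q *ᵥ x) a := by
  obtain ⟨b, hb⟩ := Function.ne_iff.mp hx₀
  exact Finset.sum_pos' (fun c _ => mul_nonneg (hQ a c).le (hx c))
    ⟨b, Finset.mem_univ b, mul_pos (hQ a b) ((hx b).lt_of_ne' hb)⟩

theorem abs_mul_dotProduct_self_le (hQ : ∀ a b, 0 ≤ Q a b) {u : ι → ℝ} {m : ℝ}
    (hu : Q *ᵥ u = m • u) : |m| * (u ⬝ᵥ u) ≤ |u| ⬝ᵥ Q *ᵥ |u| := by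
  have hquad : |u ⬝ᵥ Q *ᵥ u| = |m| * (u ⬝ᵥ u) := by
    rw [hu, dotProduct_smul, smul_eq_mul, abs_mul,
      abs_of_nonneg (a := u ⬝ᵥ u) (Fintype.sum_nonneg fun a => mul_self_nonneg (u a))]
  rw [← hquad]
  simp only [dotProduct, mulVec, Finset.mul_sum]
  refine (Finset.abs_sum_le_sum_abs _ _).trans (Finset.sum_le_sum fun a _ => ?_)
  refine (Finset.abs_sum_le_sum_abs _ _).trans_eq (Finset.sum_congr rfl fun b _ => ?_)
  simp [abs_mul, abs_of_nonneg (hQ a b)]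

theorem nonneg_or_nonpos_of_abs_mulVec_eq (hQ : ∀ a b, 0 < Q a b) {u : ι → ℝ} (a : ι)
    (h : |(Q *ᵥ u) a| = (Q *ᵥ |u|) a) : 0 ≤ u ∨ u ≤ 0 := by
  have hnonneg {v : ι → ℝ} (hv : (Q *ᵥ v) a = (Q *ᵥ |v|) a) : 0 ≤ v := fun b => by
    have hle : ∀ c ∈ Finset.univ, Q a c * v c ≤ Q a c * |v c| := fun c _ =>
      mul_le_mul_of_nonneg_left (le_abs_self _) (hQ a c).le
    have hb := (Finset.sum_eq_sum_iff_of_le hle).mp hv b (Finset.mem_univ b)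
    exact abs_eq_self.mp (mul_left_cancel₀ (hQ a b).ne' hb).symm
  rcases abs_choice ((Q *ᵥ u) a) with hu | hu
  · exact .inl (hnonneg (hu ▸ h))
  · refine .inr (neg_nonneg.mp (hnonneg ?_))
    rw [mulVec_neg, abs_neg, Pi.neg_apply, ← hu, h]

theorem abs_dotProduct_abs (u : ι → ℝ) : |u| ⬝ᵥ |u| = u ⬝ᵥ u := by
  simp only [dotProduct, Pi.abs_apply, abs_mul_abs_self]

end Nonneg

namespace IsHermitian

variable {ι : Type*} [Fintype ι] [DecidableEq ι] {Q : Matrix ι ι ℝ} (hQ : Q.IsHermitian) {l : ℝ}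

open scoped MatrixOrder in
theorem posSemidef_smul_one_sub (hl : ∀ k, hQ.eigenvalues k ≤ l) : (l • 1 - Q).PosSemidef := by
  have hle : Q ≤ algebraMap ℝ _ l := by
    rw [le_algebraMap_iff_spectrum_le hQ.isSelfAdjoint, hQ.spectrum_real_eq_range_eigenvalues]
    rintro _ ⟨k, rfl⟩
    exact hl k
  rwa [Matrix.le_iff, Algebra.algebraMap_eq_smul_one] at hle

theorem dotProduct_mulVec_le (hl : ∀ k, hQ.eigenvalues k ≤ l) (x : ι → ℝ) :
    x ⬝ᵥ Q *ᵥ x ≤ l * (x ⬝ᵥ x) := by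
  have := (hQ.posSemidef_smul_one_sub hl).dotProduct_mulVec_nonneg x
  rw [star_trivial, sub_mulVec, dotProduct_sub, smul_mulVec, one_mulVec, dotProduct_smul,
    smul_eq_mul] at this
  linarith

theorem mulVec_eq_smul_of_dotProduct_mulVec_eq (hl : ∀ k, hQ.eigenvalues k ≤ l) {x : ι → ℝ}
    (hx : x ⬝ᵥ Q *ᵥ x = l * (x ⬝ᵥ x)) : Q *ᵥ x = l • x := by
  have := ((hQ.posSemidef_smul_one_sub hl).dotProduct_mulVec_zero_iff x).mp (by
    rw [star_trivial, sub_mulVec, dotProduct_sub, smul_mulVec, one_mulVec, dotProduct_smul,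
      smul_eq_mul, hx, sub_self])
  rwa [sub_mulVec, smul_mulVec, one_mulVec, sub_eq_zero, eq_comm] at this

theorem abs_le_of_mulVec_eq_smul (hpos : ∀ a b, 0 < Q a b) (hl : ∀ k, hQ.eigenvalues k ≤ l)
    {u : ι → ℝ} {m : ℝ} (hu : Q *ᵥ u = m • u) (hu₀ : u ≠ 0) : |m| ≤ l := by
  have hchain := (abs_mul_dotProduct_self_le (fun a b => (hpos a b).le) hu).trans
    (hQ.dotProduct_mulVec_le hl |u|)
  rw [abs_dotProduct_abs] at hchain
  have hu_sq : 0 < u ⬝ᵥ u := (Fintype.sum_nonneg fun a => mul_self_nonneg (u a)).lt_of_ne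
    (Ne.symm (dotProduct_self_eq_zero.not.mpr hu₀))
  exact le_of_mul_le_mul_right hchain hu_sq

theorem mul_pos_of_mulVec_eq_smul (hpos : ∀ a b, 0 < Q a b) (hl : ∀ k, hQ.eigenvalues k ≤ l)
    {u : ι → ℝ} {m : ℝ} (hu : Q *ᵥ u = m • u) (hu₀ : u ≠ 0) (hm : |m| = l) :
    0 < l ∧ ∀ a b, 0 < u a * u b := by
  have habs_eig : Q *ᵥ |u| = l • |u| := by
    refine hQ.mulVec_eq_smul_of_dotProduct_mulVec_eq hl (le_antisymm
      (hQ.dotProduct_mulVec_le hl |u|) ?_)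
    rw [abs_dotProduct_abs, ← hm]
    exact abs_mul_dotProduct_self_le (fun a b => (hpos a b).le) hu
  have hpos_abs (a : ι) : 0 < l * |u a| := by
    simpa [habs_eig] using mulVec_pos_of_pos hpos (abs_nonneg u) (by simpa using hu₀) a
  obtain ⟨a₀, -⟩ := Function.ne_iff.mp hu₀
  have hl₀ : 0 < l := pos_of_mul_pos_left (hpos_abs a₀) (abs_nonneg _)
  have hu_ne (a : ι) : u a ≠ 0 := abs_pos.mp (pos_of_mul_pos_right (hpos_abs a) hl₀.le)
  refine ⟨hl₀, ?_⟩
  have hsign : |(Q *ᵥ u) a₀| = (Q *ᵥ |u|) a₀ := by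
    simp [hu, habs_eig, abs_mul, hm]
  rcases nonneg_or_nonpos_of_abs_mulVec_eq hpos a₀ hsign with h | h
  · exact fun a b => mul_pos ((h a).lt_of_ne' (hu_ne a)) ((h b).lt_of_ne' (hu_ne b))
  · exact fun a b => mul_pos_of_neg_of_neg ((h a).lt_of_ne (hu_ne a)) ((h b).lt_of_ne (hu_ne b))

theorem exists_dominant_eigenvalue [Nonempty ι] (hpos : ∀ a b, 0 < Q a b) :
    ∃ k₀, 0 < hQ.eigenvalues k₀ ∧ ∀ k ≠ k₀, |hQ.eigenvalues k| < hQ.eigenvalues k₀ := by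
  obtain ⟨k₀, -, hmax⟩ :=
    Finset.exists_max_image Finset.univ hQ.eigenvalues Finset.univ_nonempty
  replace hmax (k : ι) : hQ.eigenvalues k ≤ hQ.eigenvalues k₀ := hmax k (Finset.mem_univ k)
  set v : ι → ι → ℝ := fun k => hQ.eigenvectorBasis k
  have hv (k : ι) : Q *ᵥ v k = hQ.eigenvalues k • v k := hQ.mulVec_eigenvectorBasis k
  have hv₀ (k : ι) : v k ≠ 0 := by
    simpa [v] using hQ.eigenvectorBasis.orthonormal.ne_zero k
  have hle (k : ι) := hQ.abs_le_of_mulVec_eq_smul hpos hmax (hv k) (hv₀ k)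
  obtain ⟨hμ₀, hsign₀⟩ := hQ.mul_pos_of_mulVec_eq_smul hpos hmax (hv k₀) (hv₀ k₀)
    (le_antisymm (hle k₀) (le_abs_self _))
  refine ⟨k₀, hμ₀, fun k hk => (hle k).lt_of_ne fun heq => ?_⟩
  obtain ⟨-, hsign⟩ := hQ.mul_pos_of_mulVec_eq_smul hpos hmax (hv k) (hv₀ k) heq
  have horth : v k₀ ⬝ᵥ v k = 0 := by
    simpa [EuclideanSpace.inner_eq_star_dotProduct] using
      hQ.eigenvectorBasis.orthonormal.2 hk
  obtain ⟨a⟩ := ‹Nonempty ι›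
  have hprod_pos : 0 < (v k₀ a * v k a) * (v k₀ ⬝ᵥ v k) := by
    rw [dotProduct, Finset.mul_sum]
    refine Finset.sum_pos (fun b _ => ?_) Finset.univ_nonempty
    rw [mul_mul_mul_comm]
    exact mul_pos (hsign₀ a b) (hsign a b)
  simp [horth] at hprod_pos

noncomputable def toEigenbasis (A : Matrix ι ι ℝ) : Matrix ι ι ℝ :=
  star (hQ.eigenvectorUnitary : Matrix ι ι ℝ) * A * hQ.eigenvectorUnitary

theorem pow_eq (s : ℕ) :
    Q ^ s = hQ.eigenvectorUnitary * diagonal (hQ.eigenvalues ^ s) *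
      star (hQ.eigenvectorUnitary : Matrix ι ι ℝ) := by
  conv_lhs => rw [hQ.spectral_theorem]
  rw [← map_pow, diagonal_pow, Unitary.conjStarAlgAut_apply]
  rfl

theorem toEigenbasis_mul_pow_mul (A B : Matrix ι ι ℝ) (i : ℕ) :
    hQ.toEigenbasis (A * Q ^ i * B) =
      hQ.toEigenbasis A * diagonal (hQ.eigenvalues ^ i) * hQ.toEigenbasis B := by
  simp only [toEigenbasis, hQ.pow_eq, Matrix.mul_assoc]

theorem trace_mul_pow (A : Matrix ι ι ℝ) (s : ℕ) :
    (A * Q ^ s).trace = ∑ k, hQ.toEigenbasis A k k * hQ.eigenvalues k ^ s := by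
  rw [hQ.pow_eq, ← Matrix.mul_assoc, trace_mul_cycle, ← Matrix.mul_assoc]
  simp [trace, toEigenbasis]

theorem toEigenbasis_one : hQ.toEigenbasis 1 = 1 := by
  simp [toEigenbasis]

theorem isHermitian_toEigenbasis {A : Matrix ι ι ℝ} (hA : A.IsHermitian) :
    (hQ.toEigenbasis A).IsHermitian :=
  isHermitian_conjTranspose_mul_mul _ hA

theorem tendsto_trace_mul_pow_div_trace_pow_add {k₀ : ι} (hμ₀ : 0 < hQ.eigenvalues k₀)
    (hdom : ∀ k ≠ k₀, |hQ.eigenvalues k| < hQ.eigenvalues k₀) (A : Matrix ι ι ℝ) (i : ℕ) :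
    Tendsto (fun s : ℕ => (A * Q ^ s).trace / (Q ^ (s + i)).trace) atTop
      (nhds (hQ.toEigenbasis A k₀ k₀ / hQ.eigenvalues k₀ ^ i)) := by
  have htrace_pow (s : ℕ) :
      (Q ^ (s + i)).trace = ∑ k, hQ.eigenvalues k ^ i * hQ.eigenvalues k ^ s := by
    rw [← one_mul (Q ^ (s + i)), hQ.trace_mul_pow, hQ.toEigenbasis_one]
    simp [pow_add, mul_comm]
  simpa only [hQ.trace_mul_pow, htrace_pow] using
    tendsto_sum_mul_pow_div_sum_mul_pow hμ₀ hdom (fun k => hQ.toEigenbasis A k k)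
      (d := fun k => hQ.eigenvalues k ^ i) (pow_ne_zero i hμ₀.ne')

theorem tendsto_trace_mul_pow_mul_mul_pow_div_trace_pow_add {k₀ : ι}
    (hμ₀ : 0 < hQ.eigenvalues k₀) (hdom : ∀ k ≠ k₀, |hQ.eigenvalues k| < hQ.eigenvalues k₀)
    {A : Matrix ι ι ℝ} (hA : A.IsHermitian) (B : Matrix ι ι ℝ) (i : ℕ) :
    Tendsto (fun s : ℕ => (A * Q ^ i * B * Q ^ s).trace / (Q ^ (s + i)).trace) atTop
      (nhds (∑ k, (hQ.eigenvalues k / hQ.eigenvalues k₀) ^ i *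
        (hQ.toEigenbasis A k k₀ * hQ.toEigenbasis B k k₀))) := by
  convert hQ.tendsto_trace_mul_pow_div_trace_pow_add hμ₀ hdom (A * Q ^ i * B) i using 2
  rw [toEigenbasis_mul_pow_mul, mul_apply, Finset.sum_div]
  refine Finset.sum_congr rfl fun k _ => ?_
  rw [mul_diagonal, ← (hQ.isHermitian_toEigenbasis hA).apply, star_trivial, div_pow,
    Pi.pow_apply]
  ring

end IsHermitian
end Matrix

theorem transfer_matrix_cauchy_schwarz_general (N : ℕ) (hN : 1 ≤ N)
    (Q : Matrix (Fin N) (Fin N) ℝ) (hQsymm : Q.IsSymm) (hQpos : ∀ a b, 0 < Q a b)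
    (f g : Fin N → ℝ) (i : ℕ) (hi : Even i) :
    ∃ LF LG LFG LFF LGG : ℝ,
      Tendsto (fun s : ℕ => (Matrix.diagonal f * Q ^ s).trace / (Q ^ s).trace)
        atTop (nhds LF) ∧
      Tendsto (fun s : ℕ => (Matrix.diagonal g * Q ^ s).trace / (Q ^ s).trace)
        atTop (nhds LG) ∧
      Tendsto (fun s : ℕ =>
          (Matrix.diagonal f * Q ^ i * Matrix.diagonal g * Q ^ s).trace /
            (Q ^ (s + i)).trace) atTop (nhds LFG) ∧
      Tendsto (fun s : ℕ =>
          (Matrix.diagonal f * Q ^ i * Matrix.diagonal f * Q ^ s).trace /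
            (Q ^ (s + i)).trace) atTop (nhds LFF) ∧
      Tendsto (fun s : ℕ =>
          (Matrix.diagonal g * Q ^ i * Matrix.diagonal g * Q ^ s).trace /
            (Q ^ (s + i)).trace) atTop (nhds LGG) ∧
      0 ≤ LFF - LF ^ 2 ∧ 0 ≤ LGG - LG ^ 2 ∧
      LFG - LF * LG ≤ Real.sqrt ((LFF - LF ^ 2) * (LGG - LG ^ 2)) := by
  have hQ : Q.IsHermitian := isHermitian_iff_isSymm.mpr hQsymm
  have : Nonempty (Fin N) := ⟨⟨0, hN⟩⟩
  obtain ⟨k₀, hμ₀, hdom⟩ := hQ.exists_dominant_eigenvalue hQpos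
  set c : Fin N → ℝ := fun k => (hQ.eigenvalues k / hQ.eigenvalues k₀) ^ i
  have hc (k : Fin N) : 0 ≤ c k := hi.pow_nonneg _
  have hc₀ : c k₀ = 1 := by simp [c, hμ₀.ne']
  set x : Fin N → ℝ := fun k => hQ.toEigenbasis (diagonal f) k k₀
  set y : Fin N → ℝ := fun k => hQ.toEigenbasis (diagonal g) k k₀
  have hlim (p : Fin N → ℝ) :=
    hQ.tendsto_trace_mul_pow_mul_mul_pow_div_trace_pow_add hμ₀ hdom (isHermitian_diagonal p)
  refine ⟨x k₀, y k₀, ∑ k, c k * (x k * y k), ∑ k, c k * (x k * x k), ∑ k, c k * (y k * y k),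
    ?_, ?_, hlim f (diagonal g) i, hlim f (diagonal f) i, hlim g (diagonal g) i,
    sum_mul_mul_sub_sq_nonneg hc hc₀ x, sum_mul_mul_sub_sq_nonneg hc hc₀ y,
    sum_mul_mul_sub_le_sqrt hc hc₀ x y⟩
  · simpa using hQ.tendsto_trace_mul_pow_div_trace_pow_add hμ₀ hdom (diagonal f) 0
  · simpa using hQ.tendsto_trace_mul_pow_div_trace_pow_add hμ₀ hdom (diagonal g) 0

/-- The transfer-matrix limits `L_F, L_G, L_{FG}, L_{FF}, L_{GG}` exist for a symmetric
matrix `Q` with strictly positive entries and 0/1 diagonal matrices `F, G`, and for even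
`i` they satisfy `L_{FF} ≥ L_F²`, `L_{GG} ≥ L_G²` and the Cauchy–Schwarz bound
`L_{FG} − L_F·L_G ≤ √((L_{FF} − L_F²)(L_{GG} − L_G²))`. -/
theorem transfer_matrix_cauchy_schwarz (N : ℕ) (hN : 1 ≤ N)
    (Q : Matrix (Fin N) (Fin N) ℝ) (hQsymm : Q.IsSymm) (hQpos : ∀ a b, 0 < Q a b)
    (f g : Fin N → ℝ) (hf : ∀ a, f a = 0 ∨ f a = 1) (hg : ∀ a, g a = 0 ∨ g a = 1)
    (i : ℕ) (hi : Even i) :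
    ∃ LF LG LFG LFF LGG : ℝ,
      Tendsto (fun s : ℕ => (Matrix.diagonal f * Q ^ s).trace / (Q ^ s).trace)
        atTop (nhds LF) ∧
      Tendsto (fun s : ℕ => (Matrix.diagonal g * Q ^ s).trace / (Q ^ s).trace)
        atTop (nhds LG) ∧
      Tendsto (fun s : ℕ =>
          (Matrix.diagonal f * Q ^ i * Matrix.diagonal g * Q ^ s).trace /
            (Q ^ (s + i)).trace) atTop (nhds LFG) ∧
      Tendsto (fun s : ℕ =>
          (Matrix.diagonal f * Q ^ i * Matrix.diagonal f * Q ^ s).trace /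
            (Q ^ (s + i)).trace) atTop (nhds LFF) ∧
      Tendsto (fun s : ℕ =>
          (Matrix.diagonal g * Q ^ i * Matrix.diagonal g * Q ^ s).trace /
            (Q ^ (s + i)).trace) atTop (nhds LGG) ∧
      0 ≤ LFF - LF ^ 2 ∧ 0 ≤ LGG - LG ^ 2 ∧
      LFG - LF * LG ≤ Real.sqrt ((LFF - LF ^ 2) * (LGG - LG ^ 2)) :=
  transfer_matrix_cauchy_schwarz_general N hN Q hQsymm hQpos f g i hi
end
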